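/- arXiv:math-ph/0508007 — 3 statements merged into one kernel-verified Lean document; each statement's English description precedes it below -/
import Mathlib

section
/- Let E_F ∈ ℝ and let Ψ be a finite positive Borel measure on ℝ² such that Ψ(ℝ² \ S_{E_F}) = 0, where S_{E_F} := ((−∞, E_F] × (E_F, ∞)) ∪ ((E_F, ∞) × (−∞, E_F]). Define, for every Borel set B ⊂ ℝ, Σ(B) := π ∫_{ℝ²} |λ₁ − λ₂| χ_B(λ₁ − λ₂) Ψ(dλ₁ dλ₂). Then for every ν > 0, with I₋ := (E_F − ν, E_F], I₊ := (E_F, E_F + ν], J₋ := (E_F − ν/2, E_F − ν/4], J₊ := (E_F + ν/4, E_F + ν/2], one has (π/2) · Ψ(J₊ × J₋) ≤ (1/ν) Σ([0, ν]) ≤ π · Ψ(I₊ × I₋). -/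
open MeasureTheory
open scoped ENNReal

noncomputable section

/-- The conductivity measure associated to a correlation measure `Ψ` on `ℝ²`,
evaluated on a Borel set `B`: `Σ(B) = π ∫ |λ₁ - λ₂| χ_B(λ₁ - λ₂) Ψ(dλ₁ dλ₂)`. -/
def condMeasure (Ψ : Measure (ℝ × ℝ)) (B : Set ℝ) : ℝ :=
  Real.pi * ∫ p : ℝ × ℝ, |p.1 - p.2| * B.indicator 1 (p.1 - p.2) ∂Ψ

/-- **Proposition 3.8**: for a finite positive Borel measure `Ψ` on `ℝ²` supported
by `S_{E_F} = ((-∞,E_F] × (E_F,∞)) ∪ ((E_F,∞) × (-∞,E_F])`, the average in-phase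
conductivity `(1/ν) Σ([0,ν])` is squeezed between `(π/2) Ψ(J₊ × J₋)` and
`π Ψ(I₊ × I₋)`. -/
theorem average_conductivity_bounds (EF : ℝ) (Ψ : Measure (ℝ × ℝ)) [IsFiniteMeasure Ψ]
    (hsupp : Ψ ((Set.Iic EF ×ˢ Set.Ioi EF ∪ Set.Ioi EF ×ˢ Set.Iic EF)ᶜ) = 0)
    (ν : ℝ) (hν : 0 < ν) :
    Real.pi / 2 *
        (Ψ (Set.Ioc (EF + ν / 4) (EF + ν / 2) ×ˢ Set.Ioc (EF - ν / 2) (EF - ν / 4))).toReal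
      ≤ (1 / ν) * condMeasure Ψ (Set.Icc 0 ν) ∧
    (1 / ν) * condMeasure Ψ (Set.Icc 0 ν)
      ≤ Real.pi * (Ψ (Set.Ioc EF (EF + ν) ×ˢ Set.Ioc (EF - ν) EF)).toReal := by
  set f : ℝ × ℝ → ℝ := fun p => |p.1 - p.2| * (Set.Icc (0:ℝ) ν).indicator 1 (p.1 - p.2) with hf
  set I : Set (ℝ × ℝ) := Set.Ioc EF (EF + ν) ×ˢ Set.Ioc (EF - ν) EF with hI
  set J : Set (ℝ × ℝ) := Set.Ioc (EF + ν / 4) (EF + ν / 2) ×ˢ Set.Ioc (EF - ν / 2) (EF - ν / 4) with hJ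
  have hIm : MeasurableSet I := (measurableSet_Ioc.prod measurableSet_Ioc)
  have hJm : MeasurableSet J := (measurableSet_Ioc.prod measurableSet_Ioc)
  have hfm : Measurable f := by
    apply Measurable.mul
    · exact (measurable_fst.sub measurable_snd).abs
    · exact (measurable_const.indicator measurableSet_Icc).comp
        (measurable_fst.sub measurable_snd)
  have hfnn : ∀ p, 0 ≤ f p := by
    intro p
    apply mul_nonneg (abs_nonneg _)
    by_cases h : (p.1 - p.2) ∈ Set.Icc (0:ℝ) ν
    · simp [Set.indicator_of_mem h]
    · simp [Set.indicator_of_notMem h]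
  have hfbd : ∀ p, f p ≤ ν := by
    intro p
    by_cases h : (p.1 - p.2) ∈ Set.Icc (0:ℝ) ν
    · simp only [hf, Set.indicator_of_mem h, Pi.one_apply, mul_one]
      rw [abs_of_nonneg h.1]; exact h.2
    · simp [hf, Set.indicator_of_notMem h, hν.le]
  have hfi : Integrable f Ψ := by
    refine (integrable_const ν).mono' hfm.aestronglyMeasurable (ae_of_all _ fun p => ?_)
    rw [Real.norm_eq_abs, abs_of_nonneg (hfnn p)]
    exact hfbd p
  -- lower bound pointwise
  have hlow : ∀ p, J.indicator (fun _ => ν / 2) p ≤ f p := by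
    intro p
    by_cases hp : p ∈ J
    · rw [Set.indicator_of_mem hp]
      obtain ⟨h1, h2⟩ := hp
      have hd1 : ν / 2 < p.1 - p.2 := by
        simp only [Set.mem_Ioc] at h1 h2; linarith [h1.1, h2.2]
      have hd2 : p.1 - p.2 ≤ ν := by
        simp only [Set.mem_Ioc] at h1 h2; linarith [h1.2, h2.1]
      have hmem : (p.1 - p.2) ∈ Set.Icc (0:ℝ) ν := ⟨by linarith, hd2⟩
      simp only [hf, Set.indicator_of_mem hmem, Pi.one_apply, mul_one]
      rw [abs_of_nonneg hmem.1]; linarith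
    · rw [Set.indicator_of_notMem hp]; exact hfnn p
  -- upper bound a.e.
  have hS : ∀ᵐ p ∂Ψ, p ∈ (Set.Iic EF ×ˢ Set.Ioi EF ∪ Set.Ioi EF ×ˢ Set.Iic EF) := by
    rw [MeasureTheory.ae_iff]
    rwa [← Set.compl_def]
  have hup : ∀ᵐ p ∂Ψ, f p ≤ I.indicator (fun _ => ν) p := by
    filter_upwards [hS] with p hp
    rcases hp with h | h
    · -- p.1 ≤ EF < p.2, difference negative
      have : p.1 - p.2 < 0 := by
        have := h.1; have := h.2
        simp only [Set.mem_Iic, Set.mem_Ioi] at *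
        linarith
      have hnot : (p.1 - p.2) ∉ Set.Icc (0:ℝ) ν := fun hc => absurd hc.1 (not_le.2 this)
      simp only [hf, Set.indicator_of_notMem hnot, mul_zero]
      exact Set.indicator_nonneg (fun _ _ => hν.le) p
    · by_cases hm : (p.1 - p.2) ∈ Set.Icc (0:ℝ) ν
      · have h1 : p.1 ∈ Set.Ioi EF := h.1
        have h2 : p.2 ∈ Set.Iic EF := h.2
        simp only [Set.mem_Ioi] at h1; simp only [Set.mem_Iic] at h2
        have hpI : p ∈ I := by
          constructor
          · exact ⟨h1, by have := hm.2; linarith⟩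
          · exact ⟨by have := hm.2; linarith, h2⟩
        rw [Set.indicator_of_mem hpI]
        exact hfbd p
      · simp only [hf, Set.indicator_of_notMem hm, mul_zero]
        exact Set.indicator_nonneg (fun _ _ => hν.le) p
  have hJi : Integrable (J.indicator fun _ => ν / 2) Ψ := (integrable_const _).indicator hJm
  have hIi : Integrable (I.indicator fun _ => ν) Ψ := (integrable_const _).indicator hIm
  have hintlow : (Ψ J).toReal * (ν / 2) ≤ ∫ p, f p ∂Ψ := by
    have := integral_mono hJi hfi hlow
    rwa [integral_indicator_const _ hJm, smul_eq_mul] at this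
  have hintup : ∫ p, f p ∂Ψ ≤ (Ψ I).toReal * ν := by
    have := integral_mono_ae hfi hIi hup
    rwa [integral_indicator_const _ hIm, smul_eq_mul] at this
  have hpi := Real.pi_pos
  have hcond : condMeasure Ψ (Set.Icc 0 ν) = Real.pi * ∫ p, f p ∂Ψ := rfl
  constructor
  · rw [hcond]
    have key := mul_le_mul_of_nonneg_left hintlow (div_pos hpi hν).le
    calc Real.pi / 2 * (Ψ J).toReal = (Real.pi / ν) * ((Ψ J).toReal * (ν / 2)) := by
          field_simp
      _ ≤ (Real.pi / ν) * ∫ p, f p ∂Ψ := key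
      _ = 1 / ν * (Real.pi * ∫ p, f p ∂Ψ) := by ring
  · rw [hcond]
    have key := mul_le_mul_of_nonneg_left hintup (div_pos hpi hν).le
    calc 1 / ν * (Real.pi * ∫ p, f p ∂Ψ) = (Real.pi / ν) * ∫ p, f p ∂Ψ := by ring
      _ ≤ (Real.pi / ν) * ((Ψ I).toReal * ν) := key
      _ = Real.pi * (Ψ I).toReal := by field_simp

end
end

section
/- Let 𝓗 be a finite-dimensional complex inner product space, let H and X be self-adjoint linear operators on 𝓗 with operator norm ‖X‖ ≤ L/2 for some real L ≥ 0. Let J₊ and J₋ be disjoint intervals both contained in an interval J ⊂ ℝ, and let f₊, f₋ : ℝ → ℝ satisfy 0 ≤ f_± ≤ χ_{J_±}. Define F_± := f_±(H) and Q := χ_J(H) via the spectral decomposition of H. Then tr(F₋ X F₊ X F₋) ≤ (L²/4) [ (tr Q)² − tr Q ]. -/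
open scoped InnerProductSpace

noncomputable section

/-! In the eigenbasis `b` of `H`, with `xᵢⱼ = ⟪bᵢ, X bⱼ⟫`,
`tr(F₋ X F₊ X F₋) = ∑ᵢ ∑ⱼ f₋(μᵢ)² f₊(μⱼ) xᵢⱼ xⱼᵢ` and `|xᵢⱼ xⱼᵢ| ≤ ‖X‖² ≤ L²/4`.
The diagonal terms vanish because `f₋ f₊ = 0` on the disjoint intervals, and the off-diagonal
weights are dominated by `qᵢ qⱼ` with `qᵢ = χ_J(μᵢ) ∈ {0, 1}`, whose sum over `i ≠ j` is
`(∑ qᵢ)² - ∑ qᵢ = (tr Q)² - tr Q`. -/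

lemma sum_sum_sq_mul_mul_le {ι : Type*} [Fintype ι] {m p q : ι → ℝ} {x : ι → ι → ℝ} {c : ℝ}
    (hm₀ : ∀ i, 0 ≤ m i) (hmq : ∀ i, m i ≤ q i) (hp₀ : ∀ i, 0 ≤ p i) (hpq : ∀ i, p i ≤ q i)
    (hmp : ∀ i, m i * p i = 0) (hq : ∀ i, q i ^ 2 = q i) (hc : 0 ≤ c) (hx : ∀ i j, x i j ≤ c) :
    ∑ i, ∑ j, m i ^ 2 * p j * x i j ≤ c * ((∑ i, q i) ^ 2 - ∑ i, q i) := by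
  classical
  have hterm : ∀ i j, m i ^ 2 * p j * x i j ≤ c * (q i * q j - if i = j then q i else 0) := by
    intro i j
    split_ifs with hij
    · subst hij
      rw [← sq, hq, sub_self, mul_zero, sq, mul_assoc (m i), hmp, mul_zero, zero_mul]
    · have hm2 : m i ^ 2 ≤ q i := hq i ▸ pow_le_pow_left₀ (hm₀ i) (hmq i) 2
      have hmp_le : m i ^ 2 * p j ≤ q i * q j :=
        mul_le_mul hm2 (hpq j) (hp₀ j) ((hm₀ i).trans (hmq i))
      calc m i ^ 2 * p j * x i j ≤ m i ^ 2 * p j * c :=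
            mul_le_mul_of_nonneg_left (hx i j) (mul_nonneg (sq_nonneg _) (hp₀ j))
        _ ≤ q i * q j * c := mul_le_mul_of_nonneg_right hmp_le hc
        _ = c * (q i * q j - 0) := by ring
  calc ∑ i, ∑ j, m i ^ 2 * p j * x i j
      ≤ ∑ i, ∑ j, c * (q i * q j - if i = j then q i else 0) :=
        Finset.sum_le_sum fun i _ => Finset.sum_le_sum fun j _ => hterm i j
    _ = c * ((∑ i, q i) ^ 2 - ∑ i, q i) := by
        simp only [← Finset.mul_sum, Finset.sum_sub_distrib, Finset.sum_ite_eq, Finset.mem_univ,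
          if_true, sq, Finset.sum_mul_sum]

lemma mul_eq_zero_of_le_indicator {α : Type*} {s t : Set α} (hst : Disjoint s t) {x : α} {u v : ℝ}
    (hu₀ : 0 ≤ u) (hu : u ≤ s.indicator 1 x) (hv₀ : 0 ≤ v) (hv : v ≤ t.indicator 1 x) :
    u * v = 0 := by
  by_cases hx : x ∈ s
  · rw [Set.indicator_of_notMem (hst.notMem_of_mem_left hx)] at hv
    rw [le_antisymm hv hv₀, mul_zero]
  · rw [Set.indicator_of_notMem hx] at hu
    rw [le_antisymm hu hu₀, zero_mul]

lemma indicator_one_sq {α : Type*} (s : Set α) (x : α) :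
    (s.indicator 1 x : ℝ) ^ 2 = s.indicator 1 x := by
  by_cases hx : x ∈ s <;> simp [hx]

namespace OrthonormalBasis

variable {𝕜 E ι : Type*} [RCLike 𝕜] [NormedAddCommGroup E] [InnerProductSpace 𝕜 E] [Fintype ι]
  (b : OrthonormalBasis ι 𝕜 E)

lemma apply_eq_sum_of_apply_eq_smul {D : E →L[𝕜] E} {d : ι → 𝕜} (hD : ∀ i, D (b i) = d i • b i)
    (v : E) : D v = ∑ i, (d i * ⟪b i, v⟫_𝕜) • b i := by
  conv_lhs => rw [← b.sum_repr' v]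
  simp only [map_sum, map_smul, hD, smul_smul, mul_comm]

lemma inner_apply_of_apply_eq_smul {D : E →L[𝕜] E} {d : ι → 𝕜} (hD : ∀ i, D (b i) = d i • b i)
    (i : ι) (v : E) : ⟪b i, D v⟫_𝕜 = d i * ⟪b i, v⟫_𝕜 := by
  rw [b.apply_eq_sum_of_apply_eq_smul hD, b.orthonormal.inner_right_fintype]

lemma trace_eq_sum_of_apply_eq_smul {D : E →L[𝕜] E} {d : ι → 𝕜} (hD : ∀ i, D (b i) = d i • b i) :
    LinearMap.trace 𝕜 E (D : E →ₗ[𝕜] E) = ∑ i, d i := by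
  rw [LinearMap.trace_eq_sum_inner _ b]
  simp [hD, inner_smul_right, b.orthonormal.1]

lemma norm_inner_apply_le (T : E →L[𝕜] E) (i j : ι) : ‖⟪b i, T (b j)⟫_𝕜‖ ≤ ‖T‖ :=
  calc ‖⟪b i, T (b j)⟫_𝕜‖ ≤ ‖b i‖ * ‖T (b j)‖ := norm_inner_le_norm _ _
    _ ≤ 1 * (‖T‖ * 1) := by
        gcongr
        · exact (b.orthonormal.1 i).le
        · simpa [b.orthonormal.1 j] using T.le_opNorm (b j)
    _ = ‖T‖ := by ring

lemma inner_comp_apply_of_apply_eq_smul {A B : E →L[𝕜] E} {a p : ι → 𝕜}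
    (hA : ∀ i, A (b i) = a i • b i) (hB : ∀ i, B (b i) = p i • b i) (X Y : E →L[𝕜] E) (i : ι) :
    ⟪b i, (A ∘L X ∘L B ∘L Y ∘L A) (b i)⟫_𝕜
      = a i ^ 2 * ∑ j, p j * (⟪b i, X (b j)⟫_𝕜 * ⟪b j, Y (b i)⟫_𝕜) := by
  simp only [ContinuousLinearMap.comp_apply, b.inner_apply_of_apply_eq_smul hA, hA i,
    b.apply_eq_sum_of_apply_eq_smul hB (Y _), map_smul, map_sum, inner_smul_right, inner_sum]
  simp only [Finset.mul_sum]
  exact Finset.sum_congr rfl fun j _ => by ring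

lemma re_trace_comp_eq {A B : E →L[𝕜] E} {a p : ι → ℝ}
    (hA : ∀ i, A (b i) = (a i : 𝕜) • b i) (hB : ∀ i, B (b i) = (p i : 𝕜) • b i)
    (X Y : E →L[𝕜] E) :
    RCLike.re (LinearMap.trace 𝕜 E ((A ∘L X ∘L B ∘L Y ∘L A : E →L[𝕜] E) : E →ₗ[𝕜] E))
      = ∑ i, ∑ j, a i ^ 2 * p j * RCLike.re (⟪b i, X (b j)⟫_𝕜 * ⟪b j, Y (b i)⟫_𝕜) := by
  simp only [LinearMap.trace_eq_sum_inner _ b, ContinuousLinearMap.coe_coe,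
    b.inner_comp_apply_of_apply_eq_smul hA hB, map_sum, Finset.mul_sum, ← RCLike.ofReal_pow,
    ← mul_assoc, ← RCLike.ofReal_mul]
  simp only [mul_assoc, RCLike.re_ofReal_mul]

lemma re_inner_mul_inner_le (X Y : E →L[𝕜] E) (i j : ι) :
    RCLike.re (⟪b i, X (b j)⟫_𝕜 * ⟪b j, Y (b i)⟫_𝕜) ≤ ‖X‖ * ‖Y‖ :=
  (RCLike.re_le_norm _).trans <| (norm_mul_le _ _).trans <|
    mul_le_mul (b.norm_inner_apply_le X i j) (b.norm_inner_apply_le Y j i) (norm_nonneg _)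
      (norm_nonneg _)

end OrthonormalBasis

theorem trace_inequality_finite_volume_general
    {𝓗 : Type} [NormedAddCommGroup 𝓗] [InnerProductSpace ℂ 𝓗]
    {ι : Type} [Fintype ι]
    (b : OrthonormalBasis ι ℂ 𝓗) (μ : ι → ℝ)
    (X Fp Fm Q : 𝓗 →L[ℂ] 𝓗)
    (L : ℝ) (hXnorm : ‖X‖ ≤ L / 2)
    (J Jp Jm : Set ℝ)
    (hdisj : Disjoint Jp Jm) (hpsub : Jp ⊆ J) (hmsub : Jm ⊆ J)
    (fp fm : ℝ → ℝ)
    (hfp0 : ∀ t, 0 ≤ fp t) (hfp1 : ∀ t, fp t ≤ Jp.indicator 1 t)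
    (hfm0 : ∀ t, 0 ≤ fm t) (hfm1 : ∀ t, fm t ≤ Jm.indicator 1 t)
    (hFp : ∀ i, Fp (b i) = ((fp (μ i) : ℝ) : ℂ) • b i)
    (hFm : ∀ i, Fm (b i) = ((fm (μ i) : ℝ) : ℂ) • b i)
    (hQ : ∀ i, Q (b i) = ((J.indicator 1 (μ i) : ℝ) : ℂ) • b i) :
    (LinearMap.trace ℂ 𝓗 ((Fm ∘L X ∘L Fp ∘L X ∘L Fm : 𝓗 →L[ℂ] 𝓗) : 𝓗 →ₗ[ℂ] 𝓗)).re ≤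
      L ^ 2 / 4 *
        ((LinearMap.trace ℂ 𝓗 (Q : 𝓗 →ₗ[ℂ] 𝓗)).re ^ 2
          - (LinearMap.trace ℂ 𝓗 (Q : 𝓗 →ₗ[ℂ] 𝓗)).re) := by
  have hle_J {f : ℝ → ℝ} {K : Set ℝ} (hf : ∀ t, f t ≤ K.indicator 1 t) (hK : K ⊆ J) (t : ℝ) :
      f t ≤ J.indicator 1 t :=
    (hf t).trans (Set.indicator_le_indicator_of_subset hK (fun _ => zero_le_one) t)
  have hX_sq : ‖X‖ * ‖X‖ ≤ L ^ 2 / 4 := by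
    nlinarith [norm_nonneg X]
  have htrQ : (LinearMap.trace ℂ 𝓗 (Q : 𝓗 →ₗ[ℂ] 𝓗)).re = ∑ i, J.indicator 1 (μ i) := by
    simp [b.trace_eq_sum_of_apply_eq_smul hQ, Complex.re_sum]
  rw [← RCLike.re_to_complex, b.re_trace_comp_eq hFm hFp, htrQ]
  exact sum_sum_sq_mul_mul_le (fun _ => hfm0 _) (fun _ => hle_J hfm1 hmsub _)
    (fun _ => hfp0 _) (fun _ => hle_J hfp1 hpsub _)
    (fun _ => mul_eq_zero_of_le_indicator hdisj.symm (hfm0 _) (hfm1 _) (hfp0 _) (hfp1 _))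
    (fun _ => indicator_one_sq J _) (by positivity)
    (fun i j => (b.re_inner_mul_inner_le X X i j).trans hX_sq)

/-- **The deterministic trace inequality (4.37)–(4.39)**: for selfadjoint `H`, `X`
on a finite-dimensional inner product space with `‖X‖ ≤ L/2`, disjoint intervals
`J₊, J₋ ⊆ J`, functions `0 ≤ f_± ≤ χ_{J_±}`, and `F_± = f_±(H)`, `Q = χ_J(H)`
defined through the spectral decomposition of `H`, one has
`tr(F₋ X F₊ X F₋) ≤ (L²/4) [(tr Q)² - tr Q]`. -/
theorem trace_inequality_finite_volume
    {𝓗 : Type} [NormedAddCommGroup 𝓗] [InnerProductSpace ℂ 𝓗] [FiniteDimensional ℂ 𝓗]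
    {ι : Type} [Fintype ι]
    (b : OrthonormalBasis ι ℂ 𝓗) (μ : ι → ℝ)
    (H X Fp Fm Q : 𝓗 →L[ℂ] 𝓗)
    (hH : ∀ i, H (b i) = (μ i : ℂ) • b i)
    (hX : IsSelfAdjoint X)
    (L : ℝ) (hL : 0 ≤ L) (hXnorm : ‖X‖ ≤ L / 2)
    (J Jp Jm : Set ℝ)
    (hJ : J.OrdConnected) (hJp : Jp.OrdConnected) (hJm : Jm.OrdConnected)
    (hdisj : Disjoint Jp Jm) (hpsub : Jp ⊆ J) (hmsub : Jm ⊆ J)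
    (fp fm : ℝ → ℝ)
    (hfp0 : ∀ t, 0 ≤ fp t) (hfp1 : ∀ t, fp t ≤ Jp.indicator 1 t)
    (hfm0 : ∀ t, 0 ≤ fm t) (hfm1 : ∀ t, fm t ≤ Jm.indicator 1 t)
    (hFp : ∀ i, Fp (b i) = ((fp (μ i) : ℝ) : ℂ) • b i)
    (hFm : ∀ i, Fm (b i) = ((fm (μ i) : ℝ) : ℂ) • b i)
    (hQ : ∀ i, Q (b i) = ((J.indicator 1 (μ i) : ℝ) : ℂ) • b i) :
    (LinearMap.trace ℂ 𝓗 ((Fm ∘L X ∘L Fp ∘L X ∘L Fm : 𝓗 →L[ℂ] 𝓗) : 𝓗 →ₗ[ℂ] 𝓗)).re ≤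
      L ^ 2 / 4 *
        ((LinearMap.trace ℂ 𝓗 (Q : 𝓗 →ₗ[ℂ] 𝓗)).re ^ 2
          - (LinearMap.trace ℂ 𝓗 (Q : 𝓗 →ₗ[ℂ] 𝓗)).re) :=
  trace_inequality_finite_volume_general b μ X Fp Fm Q L hXnorm J Jp Jm hdisj hpsub hmsub fp fm hfp0
    hfp1 hfm0 hfm1 hFp hFm hQ

end
end

section
/- Let A and B be commuting self-adjoint linear operators on a finite-dimensional complex inner product space, let E ∈ ℝ, and let P_A := χ_{(−∞, E]}(A) and P_B := χ_{(−∞, E]}(B) be the spectral projections of A and B onto (−∞, E]. Then the operator −(A − B)(P_A − P_B) is self-adjoint and positive semidefinite. -/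
/-!
`A` and `B` have a common orthonormal eigenbasis. On a joint eigenvector with eigenvalues `a` of
`A` and `b` of `B`, the projections `P_A` and `P_B` act as the scalars `χ a` and `χ b`, where
`χ` is the indicator of `(-∞, E]`; hence `-(A - B)(P_A - P_B)` acts as `(b - a)(χ a - χ b)`,
which is nonnegative because `χ` is antitone. An operator that is diagonal in an orthonormal
basis with nonnegative entries is positive.
-/

open Module.End

theorem Antitone.sub_mul_sub_nonneg {R : Type*} [Ring R] [LinearOrder R] [IsOrderedRing R]
    {f : R → R} (hf : Antitone f) (a b : R) : 0 ≤ (b - a) * (f a - f b) := by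
  rcases le_total a b with hab | hba
  · exact mul_nonneg (sub_nonneg.mpr hab) (sub_nonneg.mpr (hf hab))
  · exact mul_nonneg_of_nonpos_of_nonpos (sub_nonpos.mpr hba) (sub_nonpos.mpr (hf hba))

namespace LinearMap.IsSymmetric

variable {𝕜 E : Type*} [RCLike 𝕜] [NormedAddCommGroup E] [InnerProductSpace 𝕜 E]

theorem apply_eq_re_smul_of_mem_eigenspace {A : E →ₗ[𝕜] E} (hA : A.IsSymmetric) {μ : 𝕜} {x : E}
    (hx : x ∈ eigenspace A μ) : A x = (RCLike.re μ : 𝕜) • x := by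
  rcases eq_or_ne x 0 with rfl | hx0
  · simp
  rw [RCLike.conj_eq_iff_re.mp
    (hA.conj_eigenvalue_eq_self (hasEigenvalue_of_hasEigenvector ⟨hx, hx0⟩))]
  exact mem_eigenspace_iff.mp hx

theorem exists_orthonormalBasis_eigenvectors_of_commute [FiniteDimensional 𝕜 E]
    {A B : E →ₗ[𝕜] E} (hA : A.IsSymmetric) (hB : B.IsSymmetric) (hAB : Commute A B) :
    ∃ (n : ℕ) (b : OrthonormalBasis (Fin n) 𝕜 E) (α β : Fin n → ℝ),
      ∀ k, A (b k) = (α k : 𝕜) • b k ∧ B (b k) = (β k : 𝕜) • b k := by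
  classical
  have hV := hA.directSum_isInternal_of_commute hB hAB
  -- `subordinateOrthonormalBasis` needs a finite index type, so drop the zero joint eigenspaces.
  have := hV.submodule_iSupIndep.fintypeNeBotOfFiniteDimensional
  have hV' := DirectSum.isInternal_ne_bot_iff.mpr hV
  have hOrth := (hA.orthogonalFamily_eigenspace_inf_eigenspace hB).comp
    (Subtype.coe_injective (p := fun i : 𝕜 × 𝕜 => eigenspace A i.2 ⊓ eigenspace B i.1 ≠ ⊥))
  let i k := (hV'.subordinateOrthonormalBasisIndex rfl k hOrth).1
  have hmem k := hV'.subordinateOrthonormalBasis_subordinate rfl k hOrth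
  exact ⟨_, _, fun k => RCLike.re (i k).2, fun k => RCLike.re (i k).1, fun k =>
    ⟨hA.apply_eq_re_smul_of_mem_eigenspace (hmem k).1,
      hB.apply_eq_re_smul_of_mem_eigenspace (hmem k).2⟩⟩

end LinearMap.IsSymmetric

namespace ContinuousLinearMap

variable {𝕜 E : Type*} [RCLike 𝕜] [NormedAddCommGroup E] [InnerProductSpace 𝕜 E]

theorem isPositive_of_apply_orthonormalBasis {ι : Type*} [Fintype ι] (b : OrthonormalBasis ι 𝕜 E)
    {T : E →L[𝕜] E} {c : ι → ℝ} (hc : ∀ i, 0 ≤ c i) (hT : ∀ i, T (b i) = (c i : 𝕜) • b i) :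
    T.IsPositive := by
  have hT_eq : T = ∑ i, (c i : 𝕜) • InnerProductSpace.rankOne 𝕜 (b i) (b i) := by
    ext x
    conv_lhs => rw [← b.sum_repr' x]
    simp [hT, smul_smul, mul_comm]
  rw [hT_eq]
  exact isPositive_sum _ fun i _ => (InnerProductSpace.isPositive_rankOne_self _).smul_of_nonneg
    (RCLike.ofReal_nonneg.mpr (hc i))

theorem IsStarProjection.apply_eq_ite_of_range_eq_iSup_eigenspace [CompleteSpace E]
    {A P : E →L[𝕜] E} (hA : IsSelfAdjoint A) (hP : IsStarProjection P)
    {p : ℝ → Prop} [DecidablePred p]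
    (hPr : LinearMap.range (P : E →ₗ[𝕜] E)
      = ⨆ (μ : ℝ) (_ : p μ), eigenspace (A : E →ₗ[𝕜] E) (μ : 𝕜))
    {μ : ℝ} {x : E} (hx : x ∈ eigenspace (A : E →ₗ[𝕜] E) (μ : 𝕜)) :
    P x = if p μ then x else 0 := by
  obtain ⟨_, hPK⟩ := isStarProjection_iff_eq_starProjection_range.mp hP
  rw [hPK]
  split_ifs with hμ
  · rw [Submodule.starProjection_eq_self_iff]
    exact hPr ▸ Submodule.mem_iSup_of_mem μ (Submodule.mem_iSup_of_mem hμ hx)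
  · rw [Submodule.starProjection_apply_eq_zero_iff]
    refine (Submodule.IsOrtho.le ?_) hx
    rw [hPr, Submodule.isOrtho_comm]
    simp only [Submodule.isOrtho_iSup_left]
    intro ν hν
    exact hA.isSymmetric.orthogonalFamily_eigenspaces.isOrtho
      (by exact_mod_cast fun h : ν = μ => hμ (h ▸ hν))

end ContinuousLinearMap

open ContinuousLinearMap

/-- **Positivity of `-ℒ𝒫_{E_F}` (proof of Theorem 3.2), finite-dimensional form**:
if `A`, `B` are commuting selfadjoint operators on a finite-dimensional complex
inner product space and `P_A = χ_{(-∞,E]}(A)`, `P_B = χ_{(-∞,E]}(B)` are their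
spectral projections onto `(-∞, E]` (characterized as the orthogonal projections
onto the span of the eigenspaces with eigenvalue `≤ E`), then
`-(A - B)(P_A - P_B)` is selfadjoint and positive semidefinite. -/
theorem neg_liouvillian_positivity
    {𝓗 : Type} [NormedAddCommGroup 𝓗] [InnerProductSpace ℂ 𝓗] [FiniteDimensional ℂ 𝓗]
    (A B PA PB : 𝓗 →L[ℂ] 𝓗) (E : ℝ)
    (hA : IsSelfAdjoint A) (hB : IsSelfAdjoint B)
    (hcomm : A ∘L B = B ∘L A)
    (hPAsa : IsSelfAdjoint PA) (hPAidem : PA ∘L PA = PA)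
    (hPAr : LinearMap.range (PA : 𝓗 →ₗ[ℂ] 𝓗)
      = ⨆ (μ : ℝ) (_ : μ ≤ E), Module.End.eigenspace (A : 𝓗 →ₗ[ℂ] 𝓗) (μ : ℂ))
    (hPBsa : IsSelfAdjoint PB) (hPBidem : PB ∘L PB = PB)
    (hPBr : LinearMap.range (PB : 𝓗 →ₗ[ℂ] 𝓗)
      = ⨆ (μ : ℝ) (_ : μ ≤ E), Module.End.eigenspace (B : 𝓗 →ₗ[ℂ] 𝓗) (μ : ℂ)) :
    (-((A - B) ∘L (PA - PB))).IsPositive := by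
  obtain ⟨n, b, α, β, hb⟩ := hA.isSymmetric.exists_orthonormalBasis_eigenvectors_of_commute
    hB.isSymmetric (congrArg toLinearMap hcomm)
  let χ : ℝ → ℝ := fun t => if t ≤ E then 1 else 0
  have hχ : Antitone χ := fun s t hst => by
    simp only [χ]
    split_ifs <;> linarith
  refine isPositive_of_apply_orthonormalBasis b (c := fun k => (β k - α k) * (χ (α k) - χ (β k)))
    (fun k => hχ.sub_mul_sub_nonneg _ _) fun k => ?_
  have hAk : A (b k) = (α k : ℂ) • b k := (hb k).1
  have hBk : B (b k) = (β k : ℂ) • b k := (hb k).2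
  have hPAk := IsStarProjection.apply_eq_ite_of_range_eq_iSup_eigenspace hA ⟨hPAidem, hPAsa⟩
    hPAr (mem_eigenspace_iff.mpr hAk)
  have hPBk := IsStarProjection.apply_eq_ite_of_range_eq_iSup_eigenspace hB ⟨hPBidem, hPBsa⟩
    hPBr (mem_eigenspace_iff.mpr hBk)
  simp only [neg_apply, comp_apply, sub_apply, hPAk, hPBk, χ]
  split_ifs <;> simp only [map_sub, map_zero, hAk, hBk] <;> push_cast <;> module
end
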